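/- Matrix bounded differences for independent variables (variance bound form): let Z = (Z₁,...,Zₙ) be independent random variables, H a measurable function into d×d Hermitian matrices, and A₁,...,Aₙ deterministic Hermitian matrices with (H(z) − H(z₁,...,zⱼ',...,zₙ))² ≼ Aⱼ² for all admissible values. Then the conditional variance V_X = (1/2)E[(X−X')² | Z] of the exchangeable pair X = H(Z) − EH(Z), X' = H(Z') − EH(Z) (Z' obtained by replacing a uniformly random coordinate of Z by an independent copy) satisfies V_X ≼ (1/(2n)) Σⱼ Aⱼ² almost surely. -/

import Mathlib

/-! The resampled difference `X − X'` is Hermitian with `(X − X')² ≼ A_J²`, so the integrand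
`½ (X − X')²` is integrable and dominated pointwise by `½ A_J²`. Conditional expectation
preserves this order because the positive semidefinite cone is closed and convex, and since `J`
is independent of `Z`, `E[½ A_J² | Z] = E[½ A_J²] = (1/(2n)) Σⱼ Aⱼ²`. -/

open MeasureTheory ProbabilityTheory

open scoped ComplexOrder

attribute [local instance] Matrix.normedAddCommGroup Matrix.normedSpace

noncomputable local instance (d : ℕ) : MeasurableSpace (Matrix (Fin d) (Fin d) ℂ) := borel _
local instance (d : ℕ) : BorelSpace (Matrix (Fin d) (Fin d) ℂ) := ⟨rfl⟩

open scoped ENNReal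

namespace Matrix

variable {n 𝕜 : Type*} [RCLike 𝕜]

theorem convex_setOf_posSemidef : Convex ℝ {M : Matrix n n 𝕜 | M.PosSemidef} :=
  fun _ hA _ hB _ _ ha hb _ => (hA.smul ha).add (hB.smul hb)

variable [Fintype n]

theorem isClosed_setOf_posSemidef : IsClosed {M : Matrix n n 𝕜 | M.PosSemidef} := by
  simp only [posSemidef_iff_dotProduct_mulVec, Set.ofPred_and, Set.ofPred_forall]
  refine .inter (isClosed_eq continuous_id.matrix_conjTranspose continuous_id) <|
    isClosed_iInter fun x => isClosed_le continuous_const ?_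
  exact continuous_const.dotProduct (continuous_id.matrix_mulVec continuous_const)

variable [DecidableEq n]

theorem IsHermitian.re_sq_apply_self {D : Matrix n n 𝕜} (hD : D.IsHermitian) (k : n) :
    RCLike.re ((D ^ 2) k k) = ∑ i, ‖D i k‖ ^ 2 := by
  rw [sq, mul_apply, map_sum]
  refine Finset.sum_congr rfl fun i _ => ?_
  rw [← hD.apply i k, norm_star, RCLike.star_def, RCLike.mul_conj, ← RCLike.ofReal_pow,
    RCLike.ofReal_re]

-- `‖·‖` is the entrywise sup norm on matrices.
theorem IsHermitian.norm_apply_sq_le_of_posSemidef_sub_sq {D B : Matrix n n 𝕜}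
    (hD : D.IsHermitian) (h : (B - D ^ 2).PosSemidef) (i k : n) : ‖D i k‖ ^ 2 ≤ ‖B‖ :=
  calc ‖D i k‖ ^ 2 ≤ ∑ i, ‖D i k‖ ^ 2 :=
        Finset.single_le_sum (f := fun i => ‖D i k‖ ^ 2) (fun _ _ => sq_nonneg _)
          (Finset.mem_univ i)
    _ = RCLike.re ((D ^ 2) k k) := (hD.re_sq_apply_self k).symm
    _ ≤ RCLike.re (B k k) := by
        have hdiag := (RCLike.nonneg_iff.mp (h.diag_nonneg (i := k))).1
        rwa [sub_apply, map_sub, sub_nonneg] at hdiag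
    _ ≤ ‖B k k‖ := RCLike.re_le_norm _
    _ ≤ ‖B‖ := norm_entry_le_entrywise_sup_norm B

theorem IsHermitian.norm_sq_le_card_mul_of_posSemidef_sub_sq {D B : Matrix n n 𝕜}
    (hD : D.IsHermitian) (h : (B - D ^ 2).PosSemidef) : ‖D ^ 2‖ ≤ Fintype.card n * ‖B‖ := by
  have hB : 0 ≤ ‖B‖ := norm_nonneg B
  refine (norm_le_iff (by positivity)).mpr fun i j => ?_
  calc ‖(D ^ 2) i j‖ ≤ ∑ k, ‖D i k‖ * ‖D k j‖ := by
        rw [sq, mul_apply]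
        exact (norm_sum_le _ _).trans_eq (by simp only [norm_mul])
    _ ≤ ∑ _k : n, ‖B‖ := Finset.sum_le_sum fun k _ => by
        nlinarith [hD.norm_apply_sq_le_of_posSemidef_sub_sq h i k,
          hD.norm_apply_sq_le_of_posSemidef_sub_sq h k j, sq_nonneg (‖D i k‖ - ‖D k j‖)]
    _ = Fintype.card n * ‖B‖ := by simp

end Matrix

-- Not inferred automatically: the matrix norm is only a local instance, whose topology is not
-- syntactically `Matrix.topologicalSpace`, and `Matrix` does not unfold to the pi type.
noncomputable local instance {n 𝕜 : Type*} [Fintype n] [RCLike 𝕜] :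
    ContinuousENorm (Matrix n n 𝕜) :=
  SeminormedAddGroup.toContinuousENorm

local instance {n 𝕜 : Type*} [Fintype n] [RCLike 𝕜] :
    SecondCountableTopology (Matrix n n 𝕜) :=
  inferInstanceAs (SecondCountableTopology (n → n → 𝕜))

theorem MeasureTheory.Integrable.sq_of_posSemidef_sub_sq {α n 𝕜 : Type*} [MeasurableSpace α]
    {μ : Measure α} [Fintype n] [DecidableEq n] [RCLike 𝕜] {B D : α → Matrix n n 𝕜}
    (hB : Integrable B μ) (hD : AEStronglyMeasurable D μ) (hherm : ∀ a, (D a).IsHermitian)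
    (hle : ∀ a, (B a - D a ^ 2).PosSemidef) : Integrable (fun a => D a ^ 2) μ :=
  (hB.norm.const_mul (Fintype.card n)).mono' (hD.pow 2) <| ae_of_all _ fun a =>
    (hherm a).norm_sq_le_card_mul_of_posSemidef_sub_sq (hle a)

theorem MeasureTheory.ae_posSemidef_condExp {α n 𝕜 : Type*} [Fintype n] [RCLike 𝕜]
    {m m₀ : MeasurableSpace α} {μ : Measure α} (hm : m ≤ m₀) [SigmaFinite (μ.trim hm)]
    {f : α → Matrix n n 𝕜} (hf : Integrable f μ) (hpsd : ∀ᵐ a ∂μ, (f a).PosSemidef) :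
    ∀ᵐ a ∂μ, (μ[f | m] a).PosSemidef :=
  Convex.condExp_mem hm hf Matrix.isClosed_setOf_posSemidef Matrix.convex_setOf_posSemidef
    hpsd

theorem ProbabilityTheory.iIndepFun.indepFun_pi {Ω ι κ : Type*} [MeasurableSpace Ω]
    {μ : Measure Ω} [Fintype κ] {β : ι → Type*} {m : ∀ i, MeasurableSpace (β i)}
    {f : ∀ i, Ω → β i} (hindep : iIndepFun f μ) (hf : ∀ i, Measurable (f i))
    {i : ι} {e : κ → ι} (he : ∀ k, e k ≠ i) :
    IndepFun (f i) (fun ω k => f (e k) ω) μ := by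
  classical
  have hdisj : Disjoint {i} (Finset.univ.image e) := by
    simpa [Finset.disjoint_left, eq_comm] using he
  exact (hindep.indepFun_finset _ _ hdisj hf).comp
    (φ := fun g => g ⟨i, Finset.mem_singleton_self i⟩)
    (ψ := fun g k => g ⟨e k, Finset.mem_image_of_mem e (Finset.mem_univ k)⟩)
    (measurable_pi_apply (X := fun j : ({i} : Finset ι) => β j) _)
    (measurable_pi_lambda _ fun k => measurable_pi_apply _)

theorem MeasureTheory.integral_comp_of_measure_preimage_singleton {Ω ι E : Type*}
    [MeasurableSpace Ω] {μ : Measure Ω} [IsFiniteMeasure μ] [Fintype ι] [MeasurableSpace ι]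
    [MeasurableSingletonClass ι] [NormedAddCommGroup E] [NormedSpace ℝ E] [CompleteSpace E]
    {J : Ω → ι} (hJ : Measurable J) {p : ℝ≥0∞} (hp : ∀ i, μ (J ⁻¹' {i}) = p) (g : ι → E) :
    ∫ ω, g (J ω) ∂μ = p.toReal • ∑ i, g i := by
  rw [← integral_map hJ.aemeasurable StronglyMeasurable.of_discrete.aestronglyMeasurable,
    integral_fintype (f := g) .of_finite, Finset.smul_sum]
  simp [measureReal_def, Measure.map_apply hJ (measurableSet_singleton _), hp]

theorem ProbabilityTheory.condExp_comp_ae_eq_smul_sum {Ω ι β E : Type*}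
    [MeasurableSpace Ω] {μ : Measure Ω} [IsFiniteMeasure μ] [Fintype ι] [MeasurableSpace ι]
    [MeasurableSingletonClass ι] [mβ : MeasurableSpace β] [NormedAddCommGroup E]
    [NormedSpace ℝ E] [CompleteSpace E] {J : Ω → ι} {Z : Ω → β} (hJ : Measurable J)
    (hZ : Measurable Z) (hJZ : IndepFun J Z μ) {p : ℝ≥0∞} (hp : ∀ i, μ (J ⁻¹' {i}) = p)
    (g : ι → E) :
    μ[fun ω => g (J ω) | mβ.comap Z] =ᵐ[μ] fun _ => p.toReal • ∑ i, g i := by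
  rw [← integral_comp_of_measure_preimage_singleton hJ hp g]
  exact condExp_indep_eq hJ.comap_le hZ.comap_le
    ((StronglyMeasurable.of_discrete (f := g)).comp_measurable (comap_measurable J)) hJZ

theorem Measurable.update_at_index {Ω ι β : Type*} [MeasurableSpace Ω] [MeasurableSpace ι]
    [MeasurableSingletonClass ι] [DecidableEq ι] [MeasurableSpace β] {X Y : Ω → ι → β}
    {J : Ω → ι} (hX : Measurable X) (hY : Measurable Y) (hJ : Measurable J) :
    Measurable fun ω => Function.update (X ω) (J ω) (Y ω (J ω)) := by
  refine measurable_pi_lambda _ fun k => ?_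
  have hk : MeasurableSet {ω | J ω = k} := hJ (measurableSet_singleton k)
  have hupdate : (fun ω => Function.update (X ω) (J ω) (Y ω (J ω)) k) =
      fun ω => if J ω = k then Y ω k else X ω k := by
    funext ω
    by_cases h : J ω = k
    · subst h; simp
    · simp [Function.update_of_ne (Ne.symm h), h]
  rw [hupdate]
  exact .ite hk ((measurable_pi_apply k).comp hY) ((measurable_pi_apply k).comp hX)

theorem matrix_bounded_differences_conditional_variance {d n : ℕ} {Ω : Type*} {𝓩 : Type}
    [MeasurableSpace Ω] (μ : Measure Ω) [IsProbabilityMeasure μ]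
    [MeasurableSpace 𝓩]
    (Z Zt : Ω → Fin n → 𝓩) (J : Ω → Fin n)
    (hZmeas : Measurable Z) (hZtmeas : Measurable Zt) (hJmeas : Measurable J)
    (hindep : iIndepFun
      (β := fun i : (Fin n ⊕ Fin n) ⊕ Unit => match i with
        | .inl _ => 𝓩
        | .inr _ => Fin n)
      (m := fun i => match i with
        | .inl _ => inferInstance
        | .inr _ => inferInstance)
      (fun i => match i with
        | .inl (.inl j) => fun ω => Z ω j
        | .inl (.inr j) => fun ω => Zt ω j
        | .inr _ => J) μ)
    (hunif : ∀ j, μ (J ⁻¹' {j}) = (n : ENNReal)⁻¹)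
    (H : (Fin n → 𝓩) → Matrix (Fin d) (Fin d) ℂ) (hHmeas : Measurable H)
    (hherm : ∀ z, (H z).IsHermitian)
    (A : Fin n → Matrix (Fin d) (Fin d) ℂ)
    (hbd : ∀ (z : Fin n → 𝓩) (j : Fin n) (z' : 𝓩),
      ((A j) ^ 2 - (H z - H (Function.update z j z')) ^ 2).PosSemidef) :
    ∀ᵐ ω ∂μ,
      (((1 : ℝ) / (2 * n)) • ∑ j, (A j) ^ 2 -
        (MeasureTheory.condExp (MeasurableSpace.comap Z inferInstance) μ
          (fun ω => ((1 : ℝ) / 2) •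
            ((H (Z ω) - (∫ ω', H (Z ω') ∂μ)) -
              (H (Function.update (Z ω) (J ω) (Zt ω (J ω))) - (∫ ω', H (Z ω') ∂μ))) ^ 2))
          ω).PosSemidef := by
  simp_rw [sub_sub_sub_cancel_right]
  set D := fun ω => H (Z ω) - H (Function.update (Z ω) (J ω) (Zt ω (J ω)))
  have hA : Integrable (fun ω => A (J ω) ^ 2) μ :=
    (Integrable.of_finite (f := fun j => A j ^ 2)).comp_measurable hJmeas
  have hDmeas : Measurable D :=
    (hHmeas.comp hZmeas).sub (hHmeas.comp (hZmeas.update_at_index hZtmeas hJmeas))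
  have hD : Integrable (fun ω => D ω ^ 2) μ :=
    hA.sq_of_posSemidef_sub_sq hDmeas.aestronglyMeasurable (fun _ => (hherm _).sub (hherm _))
      fun _ => hbd _ _ _
  have hJZ : IndepFun J Z μ :=
    hindep.indepFun_pi (i := .inr ()) (e := fun j => .inl (.inl j))
      (by rintro ((j | j) | -) <;> fun_prop) (by simp)
  have hG : Integrable (fun ω => ((1 : ℝ) / 2) • A (J ω) ^ 2) μ := hA.smul ((1 : ℝ) / 2)
  have hF : Integrable (fun ω => ((1 : ℝ) / 2) • D ω ^ 2) μ := hD.smul ((1 : ℝ) / 2)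
  have hdiff := ae_posSemidef_condExp hZmeas.comap_le (hG.sub hF) <| ae_of_all _ fun ω => by
    simpa only [Pi.sub_apply, ← smul_sub] using
      (hbd (Z ω) (J ω) (Zt ω (J ω))).smul (by norm_num : (0 : ℝ) ≤ 1 / 2)
  have hmean : ((n : ℝ≥0∞)⁻¹).toReal • ∑ j, ((1 : ℝ) / 2) • A j ^ 2 =
      ((1 : ℝ) / (2 * n)) • ∑ j, A j ^ 2 := by
    rw [← Finset.smul_sum, smul_smul, ENNReal.toReal_inv, ENNReal.toReal_natCast]
    congr 1
    ring
  filter_upwards [hdiff, condExp_sub hG hF _,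
    condExp_comp_ae_eq_smul_sum hJmeas hZmeas hJZ hunif fun j => ((1 : ℝ) / 2) • A j ^ 2]
    with ω hω hsub hconst
  rwa [hsub, Pi.sub_apply, hconst, hmean] at hω
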